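/- arXiv:1808.08849 — 5 statements merged into one kernel-verified Lean document; each statement's English description precedes it below -/
import Mathlib

section
/- Let n, m be integers with 1 ≤ m ≤ n − 2 and P(x) = x² − nx + m. Then for every integer q ≥ 1 and every polynomial Q of the form Q(x) = x^p − Σ_{i=0}^{p−1} b_i x^i with p ≥ 1 and integer coefficients b_i ≥ 0, the polynomial P(x^q) = x^{2q} − n·x^q + m does not divide Q(x) in ℤ[x]. -/
open Polynomial

/-- **Proposition 3.** For integers `1 ≤ m ≤ n - 2`, `P(x) = x² - nx + m`,
any `q ≥ 1` and any polynomial `Q(x) = x^p - ∑_{i<p} bᵢ xⁱ` with `p ≥ 1` and integer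
coefficients `bᵢ ≥ 0`, the polynomial `P(x^q) = x^(2q) - n x^q + m` does not divide `Q`
in `ℤ[x]`. -/
theorem not_dvd_monic_nonpos_coeffs
    (n m : ℤ) (hm : 1 ≤ m) (hn : m ≤ n - 2)
    (q : ℕ) (hq : 1 ≤ q)
    (p : ℕ) (hp : 1 ≤ p)
    (b : ℕ → ℤ) (hb : ∀ i < p, 0 ≤ b i) :
    ¬ (X ^ (2 * q) - C n * X ^ q + C m ∣
        X ^ p - ∑ i ∈ Finset.range p, C (b i) * X ^ i) := by
  intro hdvd
  set f : ℝ → ℝ := fun x => x ^ (2*q) - n * x ^ q + m with hf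
  have hcont : Continuous f := by fun_prop
  have hmR : (1:ℝ) ≤ m := by exact_mod_cast hm
  have hnR : (m:ℝ) ≤ n - 2 := by exact_mod_cast hn
  have hn3 : (3:ℝ) ≤ n := by linarith
  have hf0 : 0 < f 0 := by
    simp only [hf, zero_pow (by omega : 2*q ≠ 0), zero_pow (by omega : q ≠ 0)]
    simp; linarith
  have hf1 : f 1 < 0 := by simp [hf]; linarith
  have hfn : 0 < f n := by
    have h1 : (n:ℝ) ≤ (n:ℝ)^q := le_self_pow₀ (by linarith) (by omega)
    have h2 : (n:ℝ)^(2*q) = ((n:ℝ)^q)^2 := by rw [mul_comm, pow_mul]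
    have h3 : (0:ℝ) < (n:ℝ)^q := by positivity
    simp only [hf, h2]
    nlinarith
  -- root in (0,1)
  obtain ⟨α, hαmem, hαroot⟩ : ∃ x ∈ Set.Icc (0:ℝ) 1, f x = 0 := by
    have := intermediate_value_Icc' (by norm_num : (0:ℝ) ≤ 1) hcont.continuousOn
    have h0 : (0:ℝ) ∈ Set.Icc (f 1) (f 0) := ⟨le_of_lt hf1, le_of_lt hf0⟩
    obtain ⟨x, hx, hx0⟩ := this h0
    exact ⟨x, hx, hx0⟩
  obtain ⟨β, hβmem, hβroot⟩ : ∃ x ∈ Set.Icc (1:ℝ) n, f x = 0 := by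
    have := intermediate_value_Icc (by linarith : (1:ℝ) ≤ n) hcont.continuousOn
    have h0 : (0:ℝ) ∈ Set.Icc (f 1) (f n) := ⟨le_of_lt hf1, le_of_lt hfn⟩
    obtain ⟨x, hx, hx0⟩ := this h0
    exact ⟨x, hx, hx0⟩
  have hα0 : 0 < α := by
    rcases lt_or_eq_of_le hαmem.1 with h | h
    · exact h
    · exfalso; rw [← h] at hαroot; linarith
  have hα1 : α < 1 := by
    rcases lt_or_eq_of_le hαmem.2 with h | h
    · exact h
    · exfalso; rw [h] at hαroot; linarith
  have hβ1 : 1 < β := by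
    rcases lt_or_eq_of_le hβmem.1 with h | h
    · exact h
    · exfalso; rw [← h] at hβroot; linarith
  have hαβ : α < β := lt_trans hα1 hβ1
  -- every real root of f is a root of Q
  have key : ∀ x : ℝ, f x = 0 →
      x ^ p = ∑ i ∈ Finset.range p, (b i : ℝ) * x ^ i := by
    intro x hx
    have h := _root_.map_dvd (Polynomial.aeval x) hdvd
    have hA : (Polynomial.aeval x) (X ^ (2*q) - C n * X ^ q + C m : ℤ[X]) = f x := by
      simp [hf]
    rw [hx] at hA
    rw [hA, zero_dvd_iff] at h
    have hQ : (Polynomial.aeval x)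
        (X ^ p - ∑ i ∈ Finset.range p, C (b i) * X ^ i : ℤ[X])
        = x ^ p - ∑ i ∈ Finset.range p, (b i : ℝ) * x ^ i := by
      simp
    rw [hQ] at h
    linarith [h]
  have hA := key α hαroot
  have hB := key β hβroot
  -- cross multiplication
  have hEq : ∑ i ∈ Finset.range p, ((b i : ℝ) * α ^ i) * β ^ p
      = ∑ i ∈ Finset.range p, ((b i : ℝ) * β ^ i) * α ^ p := by
    rw [← Finset.sum_mul, ← Finset.sum_mul, ← hA, ← hB]; ring
  by_cases hall : ∀ i < p, b i = 0
  · have : (∑ i ∈ Finset.range p, (b i : ℝ) * α ^ i) = 0 := by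
      apply Finset.sum_eq_zero
      intro i hi
      rw [hall i (Finset.mem_range.mp hi)]; simp
    rw [this] at hA
    have : α ^ p > 0 := by positivity
    linarith
  · push_neg at hall
    obtain ⟨j, hjp, hj0⟩ := hall
    have hjpos : 0 < b j := lt_of_le_of_ne (hb j hjp) (Ne.symm hj0)
    have hterm : ∀ i ∈ Finset.range p,
        ((b i : ℝ) * β ^ i) * α ^ p ≤ ((b i : ℝ) * α ^ i) * β ^ p := by
      intro i hi
      have hip : i < p := Finset.mem_range.mp hi
      have hbi : (0:ℝ) ≤ b i := by exact_mod_cast hb i hip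
      have hpow : β ^ i * α ^ p ≤ α ^ i * β ^ p := by
        have h1 : α ^ p = α ^ i * α ^ (p - i) := by
          rw [← pow_add]; congr 1; omega
        have h2 : β ^ p = β ^ i * β ^ (p - i) := by
          rw [← pow_add]; congr 1; omega
        rw [h1, h2]
        have : α ^ (p - i) ≤ β ^ (p - i) :=
          pow_le_pow_left₀ (le_of_lt hα0) (le_of_lt hαβ) _
        have hβi : (0:ℝ) ≤ β ^ i := by positivity
        have hαi : (0:ℝ) ≤ α ^ i := by positivity
        nlinarith [mul_le_mul_of_nonneg_left this (mul_nonneg hαi hβi)]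
      nlinarith
    have hstrict : ((b j : ℝ) * β ^ j) * α ^ p < ((b j : ℝ) * α ^ j) * β ^ p := by
      have hbj : (0:ℝ) < b j := by exact_mod_cast hjpos
      have hpow : β ^ j * α ^ p < α ^ j * β ^ p := by
        have h1 : α ^ p = α ^ j * α ^ (p - j) := by
          rw [← pow_add]; congr 1; omega
        have h2 : β ^ p = β ^ j * β ^ (p - j) := by
          rw [← pow_add]; congr 1; omega
        rw [h1, h2]
        have hlt : α ^ (p - j) < β ^ (p - j) :=
          pow_lt_pow_left₀ hαβ (le_of_lt hα0) (by omega)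
        have hβj : (0:ℝ) < β ^ j := by positivity
        have hαj : (0:ℝ) < α ^ j := by positivity
        nlinarith [mul_lt_mul_of_pos_left hlt (mul_pos hαj hβj)]
      nlinarith
    have hlt : ∑ i ∈ Finset.range p, ((b i : ℝ) * β ^ i) * α ^ p
        < ∑ i ∈ Finset.range p, ((b i : ℝ) * α ^ i) * β ^ p :=
      Finset.sum_lt_sum hterm ⟨j, Finset.mem_range.mpr hjp, hstrict⟩
    linarith [hEq, hlt]
end

section
/- Let n, m be integers with 1 ≤ m ≤ n − 2. Then there is no polynomial U ∈ ℤ[x] such that (x² − nx + m)·U(x) = x^p − Σ_{i=0}^{p−1} b_i x^i for some p ≥ 1 and integers b_i ≥ 0; i.e., x² − nx + m divides no monic polynomial all of whose non-leading coefficients are nonpositive integers. -/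
open Polynomial

/-- For integers `1 ≤ m ≤ n - 2`, there is no `U ∈ ℤ[x]` with
`(x² - nx + m)·U(x) = x^p - ∑_{i<p} bᵢ xⁱ` for some `p ≥ 1` and integers `bᵢ ≥ 0`;
i.e. `x² - nx + m` divides no monic polynomial all of whose non-leading coefficients
are nonpositive. -/
theorem no_monic_nonpos_multiple
    (n m : ℤ) (hm : 1 ≤ m) (hn : m ≤ n - 2) :
    ¬ ∃ (U : ℤ[X]) (p : ℕ) (b : ℕ → ℤ), 1 ≤ p ∧ (∀ i < p, 0 ≤ b i) ∧
        (X ^ 2 - C n * X + C m) * U =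
          X ^ p - ∑ i ∈ Finset.range p, C (b i) * X ^ i := by
  rintro ⟨U, p, b, hp, hb, heq⟩
  -- real roots
  have hmn : (1:ℝ) ≤ (m:ℝ) := by exact_mod_cast hm
  have hnm : (m:ℝ) ≤ (n:ℝ) - 2 := by exact_mod_cast hn
  have hn3 : (3:ℝ) ≤ (n:ℝ) := by linarith
  set D : ℝ := (n:ℝ)^2 - 4*m with hD
  have hDpos : 0 < D := by nlinarith
  set s : ℝ := Real.sqrt D with hs
  have hs2 : s^2 = D := Real.sq_sqrt hDpos.le
  have hspos : 0 < s := Real.sqrt_pos.mpr hDpos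
  have hsn : s < (n:ℝ) := by nlinarith [Real.sqrt_nonneg D]
  set β : ℝ := ((n:ℝ) + s)/2 with hβ
  set γ : ℝ := ((n:ℝ) - s)/2 with hγ
  have hγpos : 0 < γ := by rw [hγ]; linarith
  have hγβ : γ < β := by rw [hγ, hβ]; linarith
  have hβpos : 0 < β := lt_trans hγpos hγβ
  have hsum : β + γ = (n:ℝ) := by rw [hβ, hγ]; ring
  have hprod : β * γ = (m:ℝ) := by
    rw [hβ, hγ]; have : ((n:ℝ)+s)/2 * (((n:ℝ)-s)/2) = ((n:ℝ)^2 - s^2)/4 := by ring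
    rw [this, hs2, hD]; ring
  have hrootβ : β^2 - (n:ℝ)*β + m = 0 := by
    rw [← hsum, ← hprod]; ring
  have hrootγ : γ^2 - (n:ℝ)*γ + m = 0 := by
    rw [← hsum, ← hprod]; ring
  -- evaluate
  have key : ∀ x : ℝ, x^2 - (n:ℝ)*x + m = 0 →
      x^p = ∑ i ∈ Finset.range p, (b i : ℝ) * x^i := by
    intro x hx
    have := congrArg (aeval x : ℤ[X] →ₐ[ℤ] ℝ) heq
    simp only [map_mul, map_add, map_sub, map_pow, aeval_X, aeval_C, map_sum,
      algebraMap_int_eq, eq_intCast, map_intCast] at this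
    rw [show (x^2 - (n:ℝ)*x + (m:ℝ)) = 0 from hx, zero_mul] at this
    linarith [this]
  have hβeq := key β hrootβ
  have hγeq := key γ hrootγ
  -- cross multiply
  have hsum0 : ∑ i ∈ Finset.range p, (b i : ℝ) * (β^i * γ^p - γ^i * β^p) = 0 := by
    have : (∑ i ∈ Finset.range p, (b i : ℝ) * β^i) * γ^p
        = (∑ i ∈ Finset.range p, (b i : ℝ) * γ^i) * β^p := by
      rw [← hβeq, ← hγeq]; ring
    rw [Finset.sum_mul, Finset.sum_mul] at this
    rw [show (∑ i ∈ Finset.range p, (b i : ℝ) * (β^i * γ^p - γ^i * β^p))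
        = ∑ i ∈ Finset.range p, ((b i : ℝ) * β^i * γ^p - (b i : ℝ) * γ^i * β^p) from
        Finset.sum_congr rfl (fun i _ => by ring), Finset.sum_sub_distrib, this, sub_self]
  have hterm : ∀ i ∈ Finset.range p, (b i : ℝ) * (β^i * γ^p - γ^i * β^p) ≤ 0 := by
    intro i hi
    rw [Finset.mem_range] at hi
    have hb' : (0:ℝ) ≤ (b i : ℝ) := by exact_mod_cast hb i hi
    have hlt : β^i * γ^p < γ^i * β^p := by
      have h1 : γ^(p-i) < β^(p-i) :=
        pow_lt_pow_left₀ hγβ hγpos.le (Nat.sub_ne_zero_of_lt hi)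
      have h2 : β^i * γ^i * γ^(p-i) < β^i * γ^i * β^(p-i) := by
        apply mul_lt_mul_of_pos_left h1
        positivity
      calc β^i * γ^p = β^i * γ^i * γ^(p-i) := by
            rw [mul_assoc, ← pow_add, Nat.add_sub_cancel' hi.le]
        _ < β^i * γ^i * β^(p-i) := h2
        _ = γ^i * β^p := by rw [mul_comm (β^i), mul_assoc, ← pow_add,
            Nat.add_sub_cancel' hi.le]
    nlinarith
  have hall := (Finset.sum_eq_zero_iff_of_nonpos hterm).mp hsum0
  have hb0 : ∀ i ∈ Finset.range p, (b i : ℝ) = 0 := by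
    intro i hi
    have h := hall i hi
    rw [Finset.mem_range] at hi
    have hlt : β^i * γ^p < γ^i * β^p := by
      have h1 : γ^(p-i) < β^(p-i) :=
        pow_lt_pow_left₀ hγβ hγpos.le (Nat.sub_ne_zero_of_lt hi)
      have h2 : β^i * γ^i * γ^(p-i) < β^i * γ^i * β^(p-i) := by
        apply mul_lt_mul_of_pos_left h1
        positivity
      calc β^i * γ^p = β^i * γ^i * γ^(p-i) := by
            rw [mul_assoc, ← pow_add, Nat.add_sub_cancel' hi.le]
        _ < β^i * γ^i * β^(p-i) := h2
        _ = γ^i * β^p := by rw [mul_comm (β^i), mul_assoc, ← pow_add,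
            Nat.add_sub_cancel' hi.le]
    have : β^i * γ^p - γ^i * β^p ≠ 0 := by linarith
    exact (mul_eq_zero.mp h).resolve_right this
  have : γ^p = 0 := by
    rw [hγeq, Finset.sum_eq_zero]
    intro i hi; rw [hb0 i hi, zero_mul]
  exact absurd this (by positivity)
end

section
/- Let n, m be integers with 1 ≤ m ≤ n − 2 and suppose m is not a perfect power, i.e., there are no natural numbers a and i with i ≥ 2 and m = a^i. Then for every integer q ≥ 1 the polynomial P(x^q) = x^{2q} − n·x^q + m is irreducible in ℤ[x]. -/
/-!
Write `q = p r` with `p` prime and argue by induction: `f(X^q) = g(X^p)` with `g = f(X^r)`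
irreducible, so by Capelli it suffices that `X^p - β` is irreducible over `ℚ(β)` for a root `β`
of `g`. By Kummer this fails only if `β = γ^p`, and then `N(γ)^p = N(β) = m`, because `g` is monic
of even degree with constant term `m`. A rational `p`-th root of an integer is an integer, so `m`
would be a perfect power. In the base case an integer root `t` of `X² - nX + m` would satisfy
`t (n - t) = m`, impossible since `1 ≤ t ≤ n - 1` forces `t (n - t) ≥ n - 1 > m`; Gauss's lemma
moves irreducibility between `ℤ[X]` and `ℚ[X]` for these monic polynomials.
-/

open Polynomial IntermediateField

theorem IntermediateField.AdjoinSimple.norm_gen_eq_coeff_zero_minpoly {K L : Type*} [Field K]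
    [Field L] [Algebra K L] {x : L} (hx : IsIntegral K x) :
    Algebra.norm K (AdjoinSimple.gen K x) =
      (-1) ^ (minpoly K x).natDegree * (minpoly K x).coeff 0 := by
  rw [← adjoin.powerBasis_gen hx, Algebra.PowerBasis.norm_gen_eq_coeff_zero_minpoly,
    adjoin.powerBasis_gen, minpoly_gen, adjoin.powerBasis_dim]

namespace Polynomial

variable {K : Type*} [Field K]

theorem irreducible_expand_of_prime {f : K[X]} (hfm : f.Monic) (hf : Irreducible f) {p : ℕ}
    (hp : p.Prime) (hpow : ∀ b : K, b ^ p ≠ (-1) ^ f.natDegree * f.coeff 0) :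
    Irreducible (expand K p f) := by
  refine irreducible_comp hfm (monic_X_pow p) hf fun E _ _ x hx ↦ ?_
  have hx_int : IsIntegral K x := minpoly.ne_zero_iff.mp (hx ▸ hf.ne_zero)
  rw [Polynomial.map_pow, map_X]
  refine X_pow_sub_C_irreducible_of_prime hp fun b hb ↦ hpow (Algebra.norm K b) ?_
  rw [← map_pow, hb, AdjoinSimple.norm_gen_eq_coeff_zero_minpoly hx_int, hx]

theorem irreducible_expand_of_even_natDegree {f : K[X]} (hfm : f.Monic) (hf : Irreducible f)
    (heven : Even f.natDegree) {q : ℕ} (hq : q ≠ 0)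
    (hpow : ∀ p, p.Prime → p ∣ q → ∀ b : K, b ^ p ≠ f.coeff 0) :
    Irreducible (expand K q f) := by
  induction q using induction_on_primes with
  | zero => exact absurd rfl hq
  | one => rwa [expand_one]
  | prime_mul p r hp IH =>
    have hr : r ≠ 0 := right_ne_zero_of_mul hq
    rw [expand_mul]
    refine irreducible_expand_of_prime ((monic_expand_iff hr.bot_lt).mpr hfm)
      (IH hr fun p' hp' hdvd ↦ hpow p' hp' (dvd_mul_of_dvd_right hdvd p)) hp fun b ↦ ?_
    rw [natDegree_expand, (heven.mul_right r).neg_one_pow, one_mul, coeff_expand hr.bot_lt]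
    simpa using hpow p hp (dvd_mul_right p r) b

end Polynomial

theorem Rat.exists_intCast_pow_eq {b : ℚ} {p : ℕ} {m : ℤ} (hp : p ≠ 0) (hb : b ^ p = m) :
    ∃ t : ℤ, t ^ p = m := by
  have hint : IsIntegral ℤ b := IsIntegral.of_pow hp.bot_lt (hb ▸ isIntegral_algebraMap)
  obtain ⟨t, rfl⟩ := IsIntegrallyClosed.isIntegral_iff.mp hint
  rw [algebraMap_int_eq, eq_intCast] at hb
  exact ⟨t, by exact_mod_cast hb⟩

theorem Int.sq_sub_mul_add_ne_zero {n m : ℤ} (hm : 1 ≤ m) (hn : m ≤ n - 2) (t : ℤ) :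
    t ^ 2 - n * t + m ≠ 0 := by
  intro h
  rcases le_or_gt t 0 with ht | ht
  · nlinarith
  rcases le_or_gt n t with hnt | hnt
  · nlinarith
  · nlinarith

namespace Polynomial

variable {R : Type*} [CommRing R]

theorem monic_X_sq_sub_C_mul_X_add_C (a b : R) : (X ^ 2 - C a * X + C b).Monic := by
  monicity!

theorem natDegree_X_sq_sub_C_mul_X_add_C [Nontrivial R] (a b : R) :
    (X ^ 2 - C a * X + C b).natDegree = 2 := by
  compute_degree!

theorem irreducible_X_sq_sub_C_mul_X_add_C {n m : ℤ} (hm : 1 ≤ m) (hn : m ≤ n - 2) :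
    Irreducible (X ^ 2 - C n * X + C m) := by
  have hmonic := monic_X_sq_sub_C_mul_X_add_C n m
  have hdeg := natDegree_X_sq_sub_C_mul_X_add_C n m
  rw [hmonic.irreducible_iff_roots_eq_zero_of_degree_le_three hdeg.ge (by omega)]
  refine Multiset.eq_zero_of_forall_notMem fun t ht ↦ Int.sq_sub_mul_add_ne_zero hm hn t ?_
  simpa using (mem_roots hmonic.ne_zero).mp ht

end Polynomial

/-- **Proposition 4.** If `1 ≤ m ≤ n - 2` and `m` is not a perfect power,
then `P(x^q) = x^(2q) - n x^q + m` is irreducible in `ℤ[x]` for every `q ≥ 1`. -/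
theorem irreducible_of_not_perfectPower
    (n m : ℤ) (hm : 1 ≤ m) (hn : m ≤ n - 2)
    (hpow : ¬ ∃ (a i : ℕ), 2 ≤ i ∧ m = (a : ℤ) ^ i) :
    ∀ q : ℕ, 1 ≤ q → Irreducible (X ^ (2 * q) - C n * X ^ q + C m) := by
  intro q hq
  have hP := monic_X_sq_sub_C_mul_X_add_C n m
  have hP_irred : Irreducible ((X ^ 2 - C n * X + C m).map (algebraMap ℤ ℚ)) :=
    hP.irreducible_iff_irreducible_map_fraction_map.mp (irreducible_X_sq_sub_C_mul_X_add_C hm hn)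
  have hP_even : Even ((X ^ 2 - C n * X + C m).map (algebraMap ℤ ℚ)).natDegree := by
    rw [hP.natDegree_map, natDegree_X_sq_sub_C_mul_X_add_C]
    exact even_two
  have hm_not_pow (p : ℕ) (hp : p.Prime) (b : ℚ) : b ^ p ≠ m := fun hb ↦ by
    obtain ⟨t, ht⟩ := Rat.exists_intCast_pow_eq hp.ne_zero hb
    refine hpow ⟨t.natAbs, p, hp.two_le, ?_⟩
    rw [← Int.natCast_pow, ← Int.natAbs_pow, ht, Int.natAbs_of_nonneg (by omega)]
  rw [show X ^ (2 * q) - C n * X ^ q + C m = expand ℤ q (X ^ 2 - C n * X + C m) by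
      simp [pow_mul'],
    ((monic_expand_iff hq).mpr hP).irreducible_iff_irreducible_map_fraction_map (K := ℚ),
    map_expand]
  exact irreducible_expand_of_even_natDegree (hP.map _) hP_irred hP_even (by omega)
    fun p hp _ b ↦ by simpa using hm_not_pow p hp b
end

section
/- Let n, m be integers with 1 ≤ m ≤ n − 2. Then n² − 4m is positive and is not a perfect square, the polynomial P(x) = x² − nx + m is irreducible in ℚ[x], and its two real roots β′ = (n − √(n² − 4m))/2 and β = (n + √(n² − 4m))/2 satisfy 0 < β′ < 1 < β. -/
open Polynomial

/-- The larger real root `β = (n + √(n² - 4m))/2` of `x² - nx + m`. -/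
noncomputable def rootBeta (n m : ℤ) : ℝ :=
  ((n : ℝ) + Real.sqrt ((n : ℝ) ^ 2 - 4 * (m : ℝ))) / 2

/-- The smaller real root `β' = (n - √(n² - 4m))/2` of `x² - nx + m`. -/
noncomputable def rootBeta' (n m : ℤ) : ℝ :=
  ((n : ℝ) - Real.sqrt ((n : ℝ) ^ 2 - 4 * (m : ℝ))) / 2

/-- For integers `1 ≤ m ≤ n - 2`: `n² - 4m` is positive and not a perfect
square, `x² - nx + m` is irreducible in `ℚ[x]`, and its roots satisfy `0 < β' < 1 < β`. -/
theorem basic_properties_of_P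
    (n m : ℤ) (hm : 1 ≤ m) (hn : m ≤ n - 2) :
    0 < n ^ 2 - 4 * m ∧ ¬ IsSquare (n ^ 2 - 4 * m) ∧
    Irreducible (X ^ 2 - C (n : ℚ) * X + C (m : ℚ)) ∧
    0 < rootBeta' n m ∧ rootBeta' n m < 1 ∧ 1 < rootBeta n m := by
  have hn3 : 3 ≤ n := by omega
  have hlow : (n - 2) ^ 2 < n ^ 2 - 4 * m := by nlinarith
  have hhigh : n ^ 2 - 4 * m < n ^ 2 := by nlinarith
  have hpos : 0 < n ^ 2 - 4 * m := by nlinarith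
  -- not a square
  have hns : ¬ IsSquare (n ^ 2 - 4 * m) := by
    rintro ⟨k, hk⟩
    have hk' : |k| * |k| = n ^ 2 - 4 * m := by
      rw [← abs_mul, abs_of_pos (hk ▸ hpos)]; exact hk.symm
    have h0 : 0 ≤ |k| := abs_nonneg k
    have h1 : n - 2 < |k| := by nlinarith
    have h2 : |k| < n := by nlinarith
    have h3 : |k| = n - 1 := by omega
    rw [h3] at hk'
    have h4 : 2 * n - 1 = 4 * m := by nlinarith
    omega
  -- no rational square root of the discriminant
  have key : ∀ q : ℚ, q ^ 2 = ((n ^ 2 - 4 * m : ℤ) : ℚ) → False := by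
    intro q hq
    have haev : aeval q ((X : ℤ[X]) ^ 2 - C (n ^ 2 - 4 * m)) = 0 := by
      rw [map_sub, map_pow, aeval_X, aeval_C, hq]
      simp
    obtain ⟨k, hk⟩ := isInteger_of_is_root_of_monic (by monicity!) haev
    apply hns
    refine ⟨k, ?_⟩
    have hk2 : (k : ℚ) = q := by simpa using hk
    have : ((k * k : ℤ) : ℚ) = ((n ^ 2 - 4 * m : ℤ) : ℚ) := by
      push_cast at hq ⊢
      rw [hk2]
      nlinarith [hq]
    exact_mod_cast this.symm
  -- irreducibility
  have hirr : Irreducible (X ^ 2 - C (n : ℚ) * X + C (m : ℚ)) := by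
    set P : ℚ[X] := X ^ 2 - C (n : ℚ) * X + C (m : ℚ) with hP
    have hdeg : P.natDegree = 2 := by
      rw [hP]; compute_degree!
    rw [Polynomial.irreducible_iff_roots_eq_zero_of_degree_le_three (by omega) (by omega)]
    by_contra h
    obtain ⟨r, hr⟩ := Multiset.exists_mem_of_ne_zero h
    have hP0 : P ≠ 0 := fun h0 => by simp [h0] at hdeg
    have hroot : P.eval r = 0 := (mem_roots hP0).1 hr
    have hev : r ^ 2 - (n : ℚ) * r + (m : ℚ) = 0 := by
      simpa [hP] using hroot
    exact key (2 * r - n) (by push_cast; nlinarith [hev])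
  refine ⟨hpos, hns, hirr, ?_, ?_, ?_⟩
  · -- 0 < β'
    have h1 : Real.sqrt ((n : ℝ) ^ 2 - 4 * m) < n := by
      rw [Real.sqrt_lt' (by exact_mod_cast hn3.trans_lt' (by norm_num) : (0:ℝ) < n)]
      have : (1:ℝ) ≤ m := by exact_mod_cast hm
      linarith
    unfold rootBeta'
    linarith
  · -- β' < 1
    have h2 : (n : ℝ) - 2 < Real.sqrt ((n : ℝ) ^ 2 - 4 * m) := by
      have h3n : (3:ℝ) ≤ n := by exact_mod_cast hn3
      rw [Real.lt_sqrt (by linarith)]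
      have : (m:ℝ) ≤ (n:ℝ) - 2 := by exact_mod_cast hn
      nlinarith
    unfold rootBeta'
    linarith
  · -- 1 < β
    have h3 : 0 ≤ Real.sqrt ((n : ℝ) ^ 2 - 4 * m) := Real.sqrt_nonneg _
    unfold rootBeta
    have : (3 : ℝ) ≤ n := by exact_mod_cast hn3
    linarith
end

section
/- Let n, m be integers with 1 ≤ m ≤ n − 2 and let β, β′ be the roots of the irreducible polynomial P(x) = x² − nx + m with 0 < β′ < 1 < β. Suppose that for some integer q ≥ 2 one has a factorization P(x^q) = Q₁(x)·Q₂(x) with Q₁, Q₂ ∈ ℤ[x] of degree ≥ 1. Then there exist an integer i ≥ 2, an integer j with 1 ≤ j < i and gcd(i,j) = 1, and a natural number a such that m = a^i; in particular m is a perfect power. -/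
/-!
Over `ℂ` every root `r` of `Q₁` satisfies `r ^ q ∈ {β, β'}`, and the leading coefficient of `Q₁`
is `±1`, so `|Q₁(0)| ^ q = ∏ |r| ^ q = β ^ a * β' ^ b` with `a + b = deg Q₁`. For `k ≥ 1` the
powers `β ^ k = u β + v` and `β' ^ k = u β' + v` (same integers `u ≠ 0`, `v`) are irrational,
because `β'` is a root of a monic integer polynomial lying in `(0, 1)`. Hence `a = b` and
`|Q₁(0)| ^ q = m ^ a` with `0 < a < q`; dividing the exponents by `gcd(a, q)` makes them coprime,
which forces `m` to be a perfect power.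
-/

open Polynomial

lemma Multiset.exists_prod_eq_pow_mul_pow {M : Type*} [CommMonoid M] {x y : M} (s : Multiset M)
    (h : ∀ z ∈ s, z = x ∨ z = y) : ∃ a b : ℕ, a + b = card s ∧ s.prod = x ^ a * y ^ b := by
  induction s using Multiset.induction with
  | empty => exact ⟨0, 0, by simp⟩
  | cons z s ih =>
    obtain ⟨a, b, hab, hprod⟩ := ih fun w hw => h w (mem_cons_of_mem hw)
    rcases h z (mem_cons_self z s) with rfl | rfl
    · exact ⟨a + 1, b, by rw [card_cons]; omega, by rw [prod_cons, hprod, pow_succ', mul_assoc]⟩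
    · exact ⟨a, b + 1, by rw [card_cons]; omega, by rw [prod_cons, hprod, pow_succ', mul_left_comm]⟩

section MonicQuadratic

variable {p : ℤ[X]}

lemma exists_pow_eq_of_aeval_eq_zero {A : Type*} [CommRing A] (hp : p.Monic)
    (hdeg : p.natDegree = 2) (k : ℕ) :
    ∃ u v : ℤ, ∀ x : A, aeval x p = 0 → x ^ k = u * x + v := by
  have hr : (X ^ k %ₘ p).degree ≤ 1 := by
    have := degree_modByMonic_lt (X ^ k) hp
    rw [degree_eq_natDegree hp.ne_zero, hdeg] at this
    exact Order.le_of_lt_succ this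
  refine ⟨(X ^ k %ₘ p).coeff 1, (X ^ k %ₘ p).coeff 0, fun x hx => ?_⟩
  have := congrArg (aeval x) (modByMonic_add_div (X ^ k) p)
  rw [eq_X_add_C_of_degree_le_one hr] at this
  simpa [hx] using this.symm

lemma irrational_pow_of_aeval_eq_zero (hp : p.Monic) (hdeg : p.natDegree = 2) {x y : ℝ}
    (hx : aeval x p = 0) (hy : aeval y p = 0) (hirr : Irrational x) {k : ℕ}
    (hk : x ^ k ≠ y ^ k) : Irrational (x ^ k) := by
  obtain ⟨u, v, huv⟩ := exists_pow_eq_of_aeval_eq_zero (A := ℝ) hp hdeg k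
  have hu : u ≠ 0 := by
    rintro rfl
    exact hk (by simp [huv x hx, huv y hy])
  rw [huv x hx]
  exact (hirr.intCast_mul hu).add_intCast v

lemma irrational_of_aeval_eq_zero (hp : p.Monic) {x : ℝ} (hx : aeval x p = 0)
    (hint : ∀ z : ℤ, x ≠ z) : Irrational x := by
  rintro ⟨r, rfl⟩
  have hr : aeval r p = 0 :=
    (algebraMap ℚ ℝ).injective (by rw [← aeval_algebraMap_apply, map_zero]; simpa using hx)
  obtain ⟨z, hz⟩ := isInteger_of_is_root_of_monic hp hr
  exact hint z (by simp [← hz])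

end MonicQuadratic

lemma exists_roots_of_le_sub_two {n m : ℤ} (hm : 1 ≤ m) (hn : m ≤ n - 2) :
    ∃ β β' : ℝ, β + β' = n ∧ β * β' = m ∧ 0 < β' ∧ β' < 1 := by
  have hmR : (1 : ℝ) ≤ m := by exact_mod_cast hm
  have hnR : (m : ℝ) ≤ n - 2 := by exact_mod_cast hn
  set s := √((n : ℝ) ^ 2 - 4 * m)
  have hs : s ^ 2 = (n : ℝ) ^ 2 - 4 * m := Real.sq_sqrt (by nlinarith)
  have hs0 : 0 ≤ s := Real.sqrt_nonneg _
  refine ⟨(n + s) / 2, (n - s) / 2, by ring, by linear_combination hs / (-4), ?_, ?_⟩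
  · nlinarith
  · nlinarith

lemma exists_roots_irrational_pow {n m : ℤ} (hm : 1 ≤ m) (hn : m ≤ n - 2) :
    ∃ β β' : ℝ, 0 < β ∧ 0 < β' ∧ β + β' = n ∧ β * β' = m ∧
      (∀ k ≠ 0, Irrational (β ^ k)) ∧ ∀ k ≠ 0, Irrational (β' ^ k) := by
  obtain ⟨β, β', hsum, hprod, hβ'0, hβ'1⟩ := exists_roots_of_le_sub_two hm hn
  have hp : (X ^ 2 - C n * X + C m : ℤ[X]).Monic := by monicity!
  have hdeg : (X ^ 2 - C n * X + C m : ℤ[X]).natDegree = 2 := by compute_degree!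
  have hroot : ∀ x : ℝ, x = β ∨ x = β' → aeval x (X ^ 2 - C n * X + C m) = 0 := by
    intro x hx
    have : (x - β) * (x - β') = 0 := by rcases hx with rfl | rfl <;> ring
    simp only [map_add, map_sub, map_mul, map_pow, aeval_X, eq_intCast, map_intCast]
    linear_combination this + x * hsum - hprod
  have hβ'irr : Irrational β' := irrational_of_aeval_eq_zero hp (hroot β' (.inr rfl)) fun z hz => by
    have h0 : (0 : ℝ) < z := hz ▸ hβ'0
    have h1 : (z : ℝ) < 1 := hz ▸ hβ'1
    norm_cast at h0 h1
    omega
  have hβirr : Irrational β := by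
    rw [eq_sub_of_add_eq hsum]
    exact hβ'irr.intCast_sub n
  have hnR : (3 : ℝ) ≤ n := by exact_mod_cast (by omega : (3 : ℤ) ≤ n)
  have hlt : β' < β := by linarith
  refine ⟨β, β', by linarith, hβ'0, hsum, hprod, fun k hk => ?_, fun k hk => ?_⟩
  · exact irrational_pow_of_aeval_eq_zero hp hdeg (hroot β (.inl rfl)) (hroot β' (.inr rfl)) hβirr
      (pow_lt_pow_left₀ hlt hβ'0.le hk).ne'
  · exact irrational_pow_of_aeval_eq_zero hp hdeg (hroot β' (.inr rfl)) (hroot β (.inl rfl)) hβ'irr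
      (pow_lt_pow_left₀ hlt hβ'0.le hk).ne

lemma eq_of_pow_mul_pow_eq_ratCast {x y : ℝ} {r t : ℚ} (hxy : x * y = r)
    (hx : ∀ k ≠ 0, Irrational (x ^ k)) (hy : ∀ k ≠ 0, Irrational (y ^ k)) {a b : ℕ}
    (h : x ^ a * y ^ b = t) : a = b := by
  wlog hba : b ≤ a generalizing x y a b
  · exact (this (by rwa [mul_comm]) hy hx (by rwa [mul_comm]) (by omega)).symm
  by_contra hab
  have hx0 : x ≠ 0 := by simpa using (hx 1 one_ne_zero).ne_zero
  have hy0 : y ≠ 0 := by simpa using (hy 1 one_ne_zero).ne_zero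
  refine hx (a - b) (by omega) ⟨t / r ^ b, ?_⟩
  push_cast
  rw [← hxy, ← h, div_eq_iff (by positivity), mul_pow, ← mul_assoc, ← pow_add,
    Nat.sub_add_cancel hba]

lemma norm_eval_zero_eq_prod_norm_roots (p : ℂ[X]) :
    ‖p.eval 0‖ = ‖p.leadingCoeff‖ * (p.roots.map (‖·‖)).prod := by
  rw [(IsAlgClosed.splits p).eval_eq_prod_roots, norm_mul]
  congr 1
  simpa using map_multiset_prod (normHom.toMonoidHom : ℂ →* ℝ) p.roots

lemma exists_abs_eval_zero_pow_eq {Q : ℤ[X]} (hQ : IsUnit Q.leadingCoeff) {q : ℕ} {β β' : ℝ}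
    (hβ : 0 ≤ β) (hβ' : 0 ≤ β')
    (hroots : ∀ r : ℂ, (Q.map (Int.castRingHom ℂ)).IsRoot r → r ^ q = β ∨ r ^ q = β') :
    ∃ a b : ℕ, a + b = Q.natDegree ∧ ((|Q.eval 0| : ℤ) : ℝ) ^ q = β ^ a * β' ^ b := by
  set P := Q.map (Int.castRingHom ℂ)
  obtain ⟨a, b, hab, hprod⟩ := (P.roots.map (‖·‖ ^ q)).exists_prod_eq_pow_mul_pow (x := β)
      (y := β') <| by
    rw [Multiset.forall_mem_map_iff]
    intro r hr
    rcases hroots r (isRoot_of_mem_roots hr) with h | h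
    · left; rw [← norm_pow, h, Complex.norm_real, Real.norm_of_nonneg hβ]
    · right; rw [← norm_pow, h, Complex.norm_real, Real.norm_of_nonneg hβ']
  refine ⟨a, b, ?_, ?_⟩
  · rw [hab, Multiset.card_map, ← (IsAlgClosed.splits P).natDegree_eq_card_roots,
      natDegree_map_eq_of_injective Int.cast_injective]
  · have hlc : ‖P.leadingCoeff‖ = 1 := by
      rw [leadingCoeff_map_of_injective Int.cast_injective, eq_intCast, Complex.norm_intCast]
      exact_mod_cast Int.isUnit_iff_abs_eq.mp hQ
    have h0 : ‖P.eval 0‖ = |Q.eval 0| := by simp [P]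
    rw [← hprod, Multiset.prod_map_pow, ← h0, norm_eval_zero_eq_prod_norm_roots, hlc, one_mul]

lemma pow_eq_or_pow_eq_of_isRoot {n m : ℤ} {q : ℕ} {Q : ℤ[X]}
    (hQ : Q ∣ X ^ (2 * q) - C n * X ^ q + C m) {β β' : ℝ} (hsum : β + β' = n)
    (hprod : β * β' = m) {r : ℂ} (hr : (Q.map (Int.castRingHom ℂ)).IsRoot r) :
    r ^ q = β ∨ r ^ q = β' := by
  have h : r ^ (2 * q) - n * r ^ q + m = 0 := by simpa using hr.dvd (Polynomial.map_dvd _ hQ)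
  have hsumC : (β : ℂ) + β' = n := by exact_mod_cast hsum
  have hprodC : (β : ℂ) * β' = m := by exact_mod_cast hprod
  have : (r ^ q - β) * (r ^ q - β') = 0 := by
    linear_combination h - r ^ q * hsumC + hprodC
  simpa [sub_eq_zero] using this

lemma exists_coprime_exponents_of_pow_eq_pow {c m a q : ℕ} (ha : 0 < a) (haq : a < q)
    (h : c ^ q = m ^ a) :
    ∃ i j : ℕ, 2 ≤ i ∧ 1 ≤ j ∧ j < i ∧ Nat.gcd i j = 1 ∧ ∃ d : ℕ, m = d ^ i := by
  obtain ⟨i, j, hij, hi, hj⟩ := Nat.exists_coprime q a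
  set g := Nat.gcd q a
  have hg : 0 < g := Nat.gcd_pos_of_pos_right q ha
  have hji : j < i := by
    rw [hi, hj] at haq; exact Nat.lt_of_mul_lt_mul_right haq
  have hj0 : 0 < j := by
    rw [hj] at ha; exact Nat.pos_of_mul_pos_right ha
  have hpow : m ^ j = c ^ i := by
    apply Nat.pow_left_injective hg.ne'
    simp only [← pow_mul, ← hi, ← hj, h]
  obtain ⟨d, hd, -⟩ := Nat.exists_eq_pow_of_exponent_coprime_of_pow_eq_pow hij.symm hpow
  exact ⟨i, j, by omega, hj0, hji, hij, d, hd⟩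

/-- **Proposition 5, main argument.** For integers `1 ≤ m ≤ n - 2`, if for
some `q ≥ 2` the polynomial `P(x^q) = x^(2q) - n x^q + m` factors as `Q₁·Q₂` with
`Q₁, Q₂ ∈ ℤ[x]` of degree `≥ 1`, then there are `i ≥ 2`, `1 ≤ j < i` with `gcd(i,j) = 1`,
and `a ∈ ℕ` with `m = a^i`; in particular `m` is a perfect power. -/
theorem perfectPower_of_factorization
    (n m : ℤ) (hm : 1 ≤ m) (hn : m ≤ n - 2)
    (q : ℕ) (hq : 2 ≤ q)
    (Q₁ Q₂ : ℤ[X]) (hd1 : 1 ≤ Q₁.natDegree) (hd2 : 1 ≤ Q₂.natDegree)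
    (hfac : X ^ (2 * q) - C n * X ^ q + C m = Q₁ * Q₂) :
    ∃ i j : ℕ, 2 ≤ i ∧ 1 ≤ j ∧ j < i ∧ Nat.gcd i j = 1 ∧
      ∃ a : ℕ, m = (a : ℤ) ^ i := by
  obtain ⟨β, β', hβ, hβ', hsum, hprod, hβirr, hβ'irr⟩ := exists_roots_irrational_pow hm hn
  have hdvd : Q₁ ∣ X ^ (2 * q) - C n * X ^ q + C m := Dvd.intro _ hfac.symm
  have hmonic : (X ^ (2 * q) - C n * X ^ q + C m : ℤ[X]).Monic := by
    monicity!
    simp [show q ≠ 0 by omega, show ¬2 * q ≤ q by omega, show q ≤ 2 * q by omega]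
  have hdeg : Q₁.natDegree + Q₂.natDegree = 2 * q := by
    rw [← natDegree_mul (by rintro rfl; simp at hd1) (by rintro rfl; simp at hd2), ← hfac]
    compute_degree! <;> omega
  obtain ⟨a, b, hab, hc⟩ := exists_abs_eval_zero_pow_eq (hmonic.isUnit_leadingCoeff_of_dvd hdvd)
    hβ.le hβ'.le fun r hr => pow_eq_or_pow_eq_of_isRoot hdvd hsum hprod hr
  obtain rfl : a = b := eq_of_pow_mul_pow_eq_ratCast (r := m) (t := |Q₁.eval 0| ^ q)
    (by exact_mod_cast hprod) hβirr hβ'irr (by exact_mod_cast hc.symm)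
  have hcm : (Q₁.eval 0).natAbs ^ q = m.natAbs ^ a := by
    rw [← mul_pow, hprod] at hc
    have : |Q₁.eval 0| ^ q = m ^ a := by exact_mod_cast hc
    simpa only [Int.natAbs_pow, Int.natAbs_abs] using congrArg Int.natAbs this
  obtain ⟨i, j, hi, hj, hji, hij, d, hd⟩ :=
    exists_coprime_exponents_of_pow_eq_pow (by omega) (by omega) hcm
  exact ⟨i, j, hi, hj, hji, hij, d, by rw [← Nat.cast_pow, ← hd]; omega⟩
end
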